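/- Suppose G_L is connected, Ω is a nonempty finite set of routings, and all physical links have the same failure probability ρ with 0 ≤ ρ ≤ 1. Let k = min_{M∈Ω} |⋂_{τ} E_P(τ,M)|, the minimal number of physical links shared by the utilized link sets of all spanning trees, where τ ranges over all spanning trees of G_L. Then the maximal survivable probability of the cross-layer network satisfies max_{M∈Ω} ∏_{e∈R(M)}(1 − ρ) = (1 − ρ)^k. (Paper's Theorem 2.) -/

import Mathlib

/-!
A physical link `e` disconnects the logical network exactly when it is utilized by every spanning
tree: a spanning tree avoiding `e` survives inside `G_L∖e`, and conversely a spanning tree of a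
connected `G_L∖e` avoids `e`. So `R(M) = ⋂_τ E_P(τ,M)`, the survivable probability of `M` is
`(1 - ρ)^{|R(M)|}`, and since `n ↦ (1 - ρ)^n` is antitone for `0 ≤ ρ ≤ 1` its maximum over `Ω` is
attained where `|R(M)|` is minimal.
-/

/-- A spanning tree of the logical network `G`. -/
def IsSpanningTree {V_L : Type*} (G τ : SimpleGraph V_L) : Prop :=
  τ ≤ G ∧ τ.Connected ∧ τ.IsAcyclic

/-- The surviving graph `G∖e` after failure of the physical link `e`, under routing `M`. -/
def survivingGraph {V_L E_P : Type*} (G : SimpleGraph V_L) (M : Sym2 V_L → Set E_P)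
    (e : E_P) : SimpleGraph V_L :=
  SimpleGraph.fromEdgeSet {μ | μ ∈ G.edgeSet ∧ e ∉ M μ}

/-- `E_P(τ,M)`: the physical links utilized by the routing of the branches of `τ`. -/
def utilizedLinks {V_L E_P : Type*} (M : Sym2 V_L → Set E_P) (τ : SimpleGraph V_L) :
    Set E_P :=
  ⋃ μ ∈ τ.edgeSet, M μ

/-- `R(M)`: the physical links whose individual failure disconnects the logical network. -/
def disconnectingLinks {V_L E_P : Type*} (G : SimpleGraph V_L)
    (M : Sym2 V_L → Set E_P) : Set E_P :=
  {e | ¬ (survivingGraph G M e).Connected}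

/-- The survivable probability of a set `S` of physical links: `∏_{e ∈ S} (1 - ρ e)`. -/
noncomputable def survProb {E_P : Type*} [Fintype E_P] (ρ : E_P → ℝ) (S : Set E_P) : ℝ :=
  ∏ e ∈ (Set.toFinite S).toFinset, (1 - ρ e)

theorem Antitone.map_finset_inf' {α β ι : Type*} [LinearOrder α] [LinearOrder β] {g : α → β}
    (hg : Antitone g) {s : Finset ι} (hs : s.Nonempty) (f : ι → α) :
    g (s.inf' hs f) = s.sup' hs (g ∘ f) := by
  obtain ⟨i, hi, hmin⟩ := s.exists_mem_eq_inf' hs f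
  refine le_antisymm ?_ (Finset.sup'_le hs _ fun j hj => hg (Finset.inf'_le f hj))
  rw [hmin]
  exact Finset.le_sup' (g ∘ f) hi

section CrossLayer

variable {V_L E_P : Type*} {G τ : SimpleGraph V_L} {M : Sym2 V_L → Set E_P} {e : E_P}

theorem SimpleGraph.Connected.exists_isSpanningTree (hG : G.Connected) :
    ∃ τ, IsSpanningTree G τ :=
  let ⟨τ, hle, hτ⟩ := hG.exists_isTree_le
  ⟨τ, hle, hτ.connected, hτ.isAcyclic⟩

theorem survivingGraph_le : survivingGraph G M e ≤ G :=
  fun _ _ huv => huv.1.1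

theorem le_survivingGraph_iff (hτ : τ ≤ G) :
    τ ≤ survivingGraph G M e ↔ e ∉ utilizedLinks M τ := by
  simp only [← SimpleGraph.edgeSet_subset_edgeSet, survivingGraph,
    SimpleGraph.edgeSet_fromEdgeSet, utilizedLinks, Set.mem_iUnion₂, not_exists]
  refine ⟨fun h μ hμ => (h hμ).1.2, fun h μ hμ => ⟨⟨SimpleGraph.edgeSet_mono hτ hμ, h μ hμ⟩, ?_⟩⟩
  exact τ.not_isDiag_of_mem_edgeSet hμ

theorem disconnectingLinks_eq_iInter_utilizedLinks (G : SimpleGraph V_L)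
    (M : Sym2 V_L → Set E_P) :
    disconnectingLinks G M = ⋂ τ, ⋂ (_ : IsSpanningTree G τ), utilizedLinks M τ := by
  ext e
  simp only [disconnectingLinks, Set.mem_ofPred_eq, Set.mem_iInter]
  constructor
  · intro hdisc τ ⟨hτG, hτ, _⟩
    by_contra he
    exact hdisc (hτ.mono ((le_survivingGraph_iff hτG).2 he))
  · intro hshared hconn
    obtain ⟨τ, hτ, hτc, hτa⟩ := hconn.exists_isSpanningTree
    have hτG : τ ≤ G := hτ.trans survivingGraph_le
    exact (le_survivingGraph_iff hτG).1 hτ (hshared τ ⟨hτG, hτc, hτa⟩)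

end CrossLayer

theorem survProb_const {E_P : Type*} [Fintype E_P] (ρ : ℝ) (S : Set E_P) :
    survProb (fun _ => ρ) S = (1 - ρ) ^ S.ncard := by
  rw [survProb, Finset.prod_const, Set.ncard_eq_toFinset_card]

theorem max_survivable_probability_eq_pow_min_shared_links_general
    {V_L E_P : Type*} [Fintype E_P]
    (G_L : SimpleGraph V_L)
    (Ω : Finset (Sym2 V_L → Set E_P)) (hΩ : Ω.Nonempty)
    (ρ : ℝ) (hρ0 : 0 ≤ ρ) (hρ1 : ρ ≤ 1) :
    Ω.sup' hΩ (fun M => survProb (fun _ => ρ) (disconnectingLinks G_L M)) =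
      (1 - ρ) ^ Ω.inf' hΩ (fun M =>
        (⋂ τ, ⋂ (_ : IsSpanningTree G_L τ), utilizedLinks M τ).ncard) := by
  have hanti : Antitone fun n : ℕ => (1 - ρ) ^ n := pow_right_anti₀ (by linarith) (by linarith)
  rw [hanti.map_finset_inf' hΩ]
  refine Finset.sup'_congr hΩ rfl fun M _ => ?_
  rw [survProb_const, disconnectingLinks_eq_iInter_utilizedLinks, Function.comp_apply]

/-- Paper's Theorem 2: under unified link failure probability `ρ`, the maximal
survivable probability of the cross-layer network equals `(1-ρ)^k`, where `k` is the
minimal number of physical links shared by the utilized link sets of all spanning trees. -/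
theorem max_survivable_probability_eq_pow_min_shared_links
    {V_L E_P : Type*} [Fintype V_L] [Fintype E_P]
    (G_L : SimpleGraph V_L) (hG : G_L.Connected)
    (Ω : Finset (Sym2 V_L → Set E_P)) (hΩ : Ω.Nonempty)
    (ρ : ℝ) (hρ0 : 0 ≤ ρ) (hρ1 : ρ ≤ 1) :
    Ω.sup' hΩ (fun M => survProb (fun _ => ρ) (disconnectingLinks G_L M)) =
      (1 - ρ) ^ Ω.inf' hΩ (fun M =>
        (⋂ τ, ⋂ (_ : IsSpanningTree G_L τ), utilizedLinks M τ).ncard) :=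
  max_survivable_probability_eq_pow_min_shared_links_general G_L Ω hΩ ρ hρ0 hρ1
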